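/- arXiv:1704.00026 — 4 statements merged into one kernel-verified Lean document; each statement's English description precedes it below -/
import Mathlib

section
/- Let D ≥ 1 be an integer, let p ∈ [0,1], let X be a random variable with X ~ Bin(D,p), and let C be an integer with 1 ≤ C ≤ D. Then E(min{C, X}) ≥ C·p + (1/4)·p·(1−p)·min{C, D−C}. -/
open Finset

/-- Expectation of `min{C, X}` for `X ~ Bin(D, p)`:
`E(min{C,X}) = ∑_{x=0}^{D} min(C,x) · (D choose x) · p^x · (1-p)^{D-x}`. -/
noncomputable def binomExpMin (D C : ℕ) (p : ℝ) : ℝ :=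
  ∑ x ∈ Finset.range (D + 1),
    (min C x : ℕ) * (D.choose x : ℝ) * p ^ x * (1 - p) ^ (D - x)

/-- Let `D ≥ 1` be an integer, `p ∈ [0,1]`, `X ~ Bin(D,p)`, and `C` an integer with
`1 ≤ C ≤ D`. Then `E(min{C, X}) ≥ C·p + (1/4)·p·(1−p)·min{C, D−C}`. -/
theorem stmt_0 (D C : ℕ) (hD : 1 ≤ D) (hC1 : 1 ≤ C) (hCD : C ≤ D)
    (p : ℝ) (hp0 : 0 ≤ p) (hp1 : p ≤ 1) :
    binomExpMin D C p ≥ (C : ℝ) * p + (1 / 4) * p * (1 - p) * (min C (D - C) : ℕ) := by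
  set m : ℕ := min C (D - C) with hm
  set b : ℕ → ℝ := fun ν => (D.choose ν : ℝ) * p ^ ν * (1 - p) ^ (D - ν) with hb
  have hq0 : (0:ℝ) ≤ 1 - p := by linarith
  have hbnn : ∀ ν, 0 ≤ b ν := fun ν => by
    positivity
  -- moment identities
  have hS1 : ∑ ν ∈ Finset.range (D+1), (ν:ℝ) * b ν = D * p := by
    have h := congrArg (Polynomial.eval p) (bernsteinPolynomial.sum_smul ℝ D)
    simpa [hb, bernsteinPolynomial, Polynomial.eval_finset_sum, mul_assoc] using h
  have hS2 : ∑ ν ∈ Finset.range (D+1), ((ν*(ν-1):ℕ):ℝ) * b ν = ((D*(D-1):ℕ):ℝ) * p^2 := by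
    have h := congrArg (Polynomial.eval p) (bernsteinPolynomial.sum_mul_smul ℝ D)
    simpa [hb, bernsteinPolynomial, Polynomial.eval_finset_sum, mul_assoc] using h
  have hcast : ∀ ν : ℕ, ((ν*(ν-1):ℕ):ℝ) = (ν:ℝ)*((ν:ℝ)-1) := by
    intro ν; cases ν with
    | zero => simp
    | succ k => push_cast [Nat.succ_sub_one]; ring
  have hDcast : ((D*(D-1):ℕ):ℝ) = (D:ℝ)*((D:ℝ)-1) := hcast D
  -- bounds on m
  have hmC : (m:ℝ) ≤ C := by exact_mod_cast Nat.min_le_left _ _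
  have hmDC : (m:ℝ) ≤ (D:ℝ) - C := by
    have h1 : (m:ℕ) ≤ D - C := Nat.min_le_right _ _
    have := (Nat.cast_le (α := ℝ)).2 h1
    rwa [Nat.cast_sub hCD] at this
  have hm0 : (0:ℝ) ≤ m := Nat.cast_nonneg _
  -- pointwise inequality
  have hpoint : ∀ ν ∈ Finset.range (D+1),
      ((C:ℝ)*D*ν + (m:ℝ)*ν*((D:ℝ)-ν)) * b ν ≤ (D:ℝ)^2 * (((min C ν : ℕ):ℝ) * b ν) := by
    intro ν hν
    have hνD : (ν:ℝ) ≤ D := by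
      have := Nat.lt_succ_iff.mp (Finset.mem_range.mp hν)
      exact_mod_cast this
    have hν0 : (0:ℝ) ≤ ν := Nat.cast_nonneg _
    have key : (C:ℝ)*D*ν + (m:ℝ)*ν*((D:ℝ)-ν) ≤ (D:ℝ)^2 * ((min C ν : ℕ):ℝ) := by
      rcases le_total C ν with h | h
      · rw [min_eq_left h]
        have hCν : (C:ℝ) ≤ ν := by exact_mod_cast h
        have fact0 : (m:ℝ)*ν ≤ (C:ℝ)*D :=
          mul_le_mul hmC hνD hν0 (Nat.cast_nonneg _)
        nlinarith [mul_le_mul_of_nonneg_left fact0 (sub_nonneg.2 hνD)]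
      · rw [min_eq_right h]
        have hCν : (ν:ℝ) ≤ C := by exact_mod_cast h
        have hCD' : (C:ℝ) ≤ D := by exact_mod_cast hCD
        have fact1 : (m:ℝ)*((D:ℝ)-ν) ≤ ((D:ℝ)-C)*D :=
          mul_le_mul hmDC (by linarith) (by linarith) (by linarith)
        nlinarith [mul_le_mul_of_nonneg_left fact1 hν0]
    calc ((C:ℝ)*D*ν + (m:ℝ)*ν*((D:ℝ)-ν)) * b ν
        ≤ ((D:ℝ)^2 * ((min C ν : ℕ):ℝ)) * b ν := by
          exact mul_le_mul_of_nonneg_right key (hbnn ν)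
      _ = (D:ℝ)^2 * (((min C ν : ℕ):ℝ) * b ν) := by ring
  -- sum of the lower bound
  have hsum : ∑ ν ∈ Finset.range (D+1), ((C:ℝ)*D*ν + (m:ℝ)*ν*((D:ℝ)-ν)) * b ν
      = (C:ℝ)*D*(D*p) + (m:ℝ)*((D:ℝ)*((D:ℝ)-1)*p*(1-p)) := by
    have expand : ∀ ν ∈ Finset.range (D+1),
        ((C:ℝ)*D*ν + (m:ℝ)*ν*((D:ℝ)-ν)) * b ν
          = ((C:ℝ)*D + (m:ℝ)*((D:ℝ)-1)) * ((ν:ℝ) * b ν) - (m:ℝ) * (((ν*(ν-1):ℕ):ℝ) * b ν) := by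
      intro ν _
      rw [hcast ν]; ring
    rw [Finset.sum_congr rfl expand, Finset.sum_sub_distrib, ← Finset.mul_sum, ← Finset.mul_sum,
      hS1, hS2, hDcast]
    ring
  -- combine
  have hmain : (D:ℝ)^2 * binomExpMin D C p ≥ (C:ℝ)*D*(D*p) + (m:ℝ)*((D:ℝ)*((D:ℝ)-1)*p*(1-p)) := by
    rw [← hsum]
    have : (D:ℝ)^2 * binomExpMin D C p
        = ∑ ν ∈ Finset.range (D+1), (D:ℝ)^2 * (((min C ν : ℕ):ℝ) * b ν) := by
      rw [binomExpMin, Finset.mul_sum]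
      exact Finset.sum_congr rfl fun ν _ => by rw [hb]; ring
    rw [this]
    exact Finset.sum_le_sum hpoint
  have hD0 : (0:ℝ) < D := by exact_mod_cast hD
  have hD2 : (0:ℝ) < (D:ℝ)^2 := by positivity
  rw [ge_iff_le, ← mul_le_mul_iff_right₀ hD2]
  refine le_trans ?_ hmain
  -- need : D^2*(C*p + (1/4)*p*(1-p)*m) ≤ C*D*(D*p) + m*(D*(D-1)*p*(1-p))
  have hpq : (0:ℝ) ≤ p * (1-p) := mul_nonneg hp0 hq0
  rcases Nat.eq_zero_or_pos m with h0 | h1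
  · have h0' : (m:ℝ) = 0 := by exact_mod_cast h0
    rw [h0']
    apply le_of_eq; ring
  · have hDC1 : 1 ≤ D - C := le_trans h1 (Nat.min_le_right _ _)
    have hD2' : 2 ≤ D := by omega
    have hD2r : (2:ℝ) ≤ D := by exact_mod_cast hD2'
    nlinarith [mul_nonneg hpq hm0, mul_nonneg (mul_nonneg hpq hm0) (sub_nonneg.2 hD2r)]
end

section
/- Let C and D be integers with 1 ≤ C ≤ D, let p ∈ [0,1], and let Y ~ Bin(C,p) and Z ~ Bin(D−C,p) be independent random variables. Suppose k is an integer with 0 ≤ k < C and p* ∈ [0,1] is such that P(Y ≤ k) ≥ p*. Then E(min{C, Y + Z}) ≥ C·p + p*·E(min{C−k, Z}). -/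
open Finset

/-- Probability mass function of the binomial distribution `Bin(n, p)` at `x`. -/
noncomputable def binomPMF (n : ℕ) (p : ℝ) (x : ℕ) : ℝ :=
  (n.choose x : ℝ) * p ^ x * (1 - p) ^ (n - x)

lemma binomPMF_nonneg (n : ℕ) {p : ℝ} (hp0 : 0 ≤ p) (hp1 : p ≤ 1) (x : ℕ) :
    0 ≤ binomPMF n p x := by
  have h1 : (0:ℝ) ≤ 1 - p := by linarith
  unfold binomPMF
  positivity

lemma binomPMF_sum (n : ℕ) (p : ℝ) :
    ∑ x ∈ Finset.range (n + 1), binomPMF n p x = 1 := by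
  calc ∑ x ∈ Finset.range (n + 1), binomPMF n p x
      = ∑ x ∈ Finset.range (n + 1), p ^ x * (1 - p) ^ (n - x) * (n.choose x : ℝ) := by
        apply Finset.sum_congr rfl; intro x _; unfold binomPMF; ring
    _ = (p + (1 - p)) ^ n := (add_pow p (1 - p) n).symm
    _ = 1 := by norm_num

lemma binom_mean (n : ℕ) (p : ℝ) :
    ∑ i ∈ Finset.range (n + 1), (i : ℝ) * binomPMF n p i = n * p := by
  cases n with
  | zero => simp [binomPMF]
  | succ m =>
    rw [Finset.sum_range_succ']
    simp only [Nat.cast_zero, zero_mul, add_zero]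
    push_cast
    have key : ∀ i ∈ Finset.range (m + 1),
        ((i : ℝ) + 1) * binomPMF (m + 1) p (i + 1) = ((m : ℝ) + 1) * p * binomPMF m p i := by
      intro i hi
      have him : i ≤ m := Nat.lt_succ_iff.mp (Finset.mem_range.mp hi)
      unfold binomPMF
      have hc : ((m : ℝ) + 1) * (m.choose i : ℝ) = ((m + 1).choose (i + 1) : ℝ) * ((i : ℝ) + 1) := by
        exact_mod_cast congrArg (Nat.cast (R := ℝ)) (Nat.add_one_mul_choose_eq m i)
      have hsub : m + 1 - (i + 1) = m - i := by omega
      rw [hsub]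
      have hpow : p ^ (i + 1) = p * p ^ i := by ring
      rw [hpow]
      linear_combination -(p * p ^ i * (1 - p) ^ (m - i)) * hc
    calc ∑ i ∈ Finset.range (m + 1), ((i : ℝ) + 1) * binomPMF (m + 1) p (i + 1)
        = ∑ i ∈ Finset.range (m + 1), ((m : ℝ) + 1) * p * binomPMF m p i :=
          Finset.sum_congr rfl key
      _ = ((m : ℝ) + 1) * p * ∑ i ∈ Finset.range (m + 1), binomPMF m p i := by
          rw [Finset.mul_sum]
      _ = ((m : ℝ) + 1) * p := by rw [binomPMF_sum]; ring

/-- Let `1 ≤ C ≤ D` be integers, `p ∈ [0,1]`, and let `Y ~ Bin(C,p)` and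
`Z ~ Bin(D−C,p)` be independent. If `0 ≤ k < C` and `p* ∈ [0,1]` satisfy
`P(Y ≤ k) ≥ p*`, then `E(min{C, Y + Z}) ≥ C·p + p*·E(min{C−k, Z})`.
Expectations and probabilities are written out via the binomial PMFs of
`Y` and `Z` (independence makes the joint PMF a product). -/
theorem stmt_1 (C D : ℕ) (hC1 : 1 ≤ C) (hCD : C ≤ D)
    (p : ℝ) (hp0 : 0 ≤ p) (hp1 : p ≤ 1)
    (k : ℕ) (hk : k < C)
    (pstar : ℝ) (hps0 : 0 ≤ pstar) (hps1 : pstar ≤ 1)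
    (hYk : ∑ i ∈ Finset.range (k + 1), binomPMF C p i ≥ pstar) :
    ∑ i ∈ Finset.range (C + 1), ∑ j ∈ Finset.range (D - C + 1),
        (min C (i + j) : ℕ) * binomPMF C p i * binomPMF (D - C) p j
      ≥ (C : ℝ) * p
          + pstar * ∑ j ∈ Finset.range (D - C + 1),
              (min (C - k) j : ℕ) * binomPMF (D - C) p j := by
  set P : ℕ → ℝ := binomPMF C p with hP
  set Q : ℕ → ℝ := binomPMF (D - C) p with hQ
  have hPn : ∀ i, 0 ≤ P i := binomPMF_nonneg C hp0 hp1
  have hQn : ∀ j, 0 ≤ Q j := binomPMF_nonneg (D - C) hp0 hp1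
  set S : ℝ := ∑ j ∈ Finset.range (D - C + 1), ((min (C - k) j : ℕ) : ℝ) * Q j with hS
  have hSnn : 0 ≤ S := Finset.sum_nonneg fun j _ =>
    mul_nonneg (Nat.cast_nonneg _) (hQn j)
  have hQsum : ∑ j ∈ Finset.range (D - C + 1), Q j = 1 := binomPMF_sum _ _
  have hmean : ∑ i ∈ Finset.range (C + 1), (i : ℝ) * P i = C * p := binom_mean C p
  -- pointwise inequality
  have key : ∀ i ∈ Finset.range (C + 1), ∀ j ∈ Finset.range (D - C + 1),
      (i : ℝ) * P i * Q j + (if i ≤ k then P i else 0) * (((min (C - k) j : ℕ) : ℝ) * Q j)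
        ≤ ((min C (i + j) : ℕ) : ℝ) * P i * Q j := by
    intro i hi j _
    have hiC : i ≤ C := Nat.lt_succ_iff.mp (Finset.mem_range.mp hi)
    by_cases hik : i ≤ k
    · have hnat : i + min (C - k) j ≤ min C (i + j) := by omega
      have hcast : (i : ℝ) + ((min (C - k) j : ℕ) : ℝ) ≤ ((min C (i + j) : ℕ) : ℝ) := by
        exact_mod_cast hnat
      have := mul_le_mul_of_nonneg_right hcast (mul_nonneg (hPn i) (hQn j))
      simp only [hik, if_pos]
      nlinarith [this]
    · have hnat : i ≤ min C (i + j) := by omega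
      have hcast : (i : ℝ) ≤ ((min C (i + j) : ℕ) : ℝ) := by exact_mod_cast hnat
      have := mul_le_mul_of_nonneg_right hcast (mul_nonneg (hPn i) (hQn j))
      simp only [hik, if_neg, not_false_iff]
      nlinarith [this]
  have step1 : ∑ i ∈ Finset.range (C + 1), ∑ j ∈ Finset.range (D - C + 1),
      ((i : ℝ) * P i * Q j + (if i ≤ k then P i else 0) * (((min (C - k) j : ℕ) : ℝ) * Q j))
      ≤ ∑ i ∈ Finset.range (C + 1), ∑ j ∈ Finset.range (D - C + 1),
        ((min C (i + j) : ℕ) : ℝ) * P i * Q j :=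
    Finset.sum_le_sum fun i hi => Finset.sum_le_sum fun j hj => key i hi j hj
  -- compute the lower sum
  have step2 : ∑ i ∈ Finset.range (C + 1), ∑ j ∈ Finset.range (D - C + 1),
      ((i : ℝ) * P i * Q j + (if i ≤ k then P i else 0) * (((min (C - k) j : ℕ) : ℝ) * Q j))
      = (C : ℝ) * p + (∑ i ∈ Finset.range (k + 1), P i) * S := by
    have inner : ∀ i : ℕ, ∑ j ∈ Finset.range (D - C + 1),
        ((i : ℝ) * P i * Q j + (if i ≤ k then P i else 0) * (((min (C - k) j : ℕ) : ℝ) * Q j))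
        = (i : ℝ) * P i + (if i ≤ k then P i else 0) * S := by
      intro i
      rw [Finset.sum_add_distrib, ← Finset.mul_sum, ← Finset.mul_sum, hQsum, mul_one]
    have hfilter : ∑ i ∈ Finset.range (C + 1), (if i ≤ k then P i else 0)
        = ∑ i ∈ Finset.range (k + 1), P i := by
      rw [← Finset.sum_subset (Finset.range_subset_range.mpr (by omega : k + 1 ≤ C + 1))
        (fun i _ hi => by
          have : ¬ i ≤ k := by simpa [Nat.lt_succ_iff] using hi
          simp [this])]
      apply Finset.sum_congr rfl
      intro i hi
      simp [Nat.lt_succ_iff.mp (Finset.mem_range.mp hi)]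
    simp only [inner]
    rw [Finset.sum_add_distrib, hmean, ← Finset.sum_mul, hfilter]
  have hT : pstar ≤ ∑ i ∈ Finset.range (k + 1), P i := hYk
  have final : (C : ℝ) * p + pstar * S ≤
      (C : ℝ) * p + (∑ i ∈ Finset.range (k + 1), P i) * S := by
    have := mul_le_mul_of_nonneg_right hT hSnn
    linarith
  calc (C : ℝ) * p + pstar * S
      ≤ (C : ℝ) * p + (∑ i ∈ Finset.range (k + 1), P i) * S := final
    _ = ∑ i ∈ Finset.range (C + 1), ∑ j ∈ Finset.range (D - C + 1),
        ((i : ℝ) * P i * Q j + (if i ≤ k then P i else 0) * (((min (C - k) j : ℕ) : ℝ) * Q j)) :=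
        step2.symm
    _ ≤ ∑ i ∈ Finset.range (C + 1), ∑ j ∈ Finset.range (D - C + 1),
        ((min C (i + j) : ℕ) : ℝ) * P i * Q j := step1
end

section
/- Let ℓ, u ∈ (0,1) be constants with ℓ + u < 1. There exists a constant c > 0 (depending only on ℓ and u) such that the following holds for every n ≥ 1: let X_1, …, X_n be independent Poisson trials with P(X_i = 1) = p_i ∈ [0,1], let X = X_1 + ⋯ + X_n, let σ² = Σ_{i=1}^n p_i(1−p_i), let k_ℓ = min{ i : P(X ≤ i) ≥ ℓ } and k_u = max{ i : P(X ≥ i) ≥ u }. Then for every integer k with k_ℓ ≤ k ≤ k_u it holds that P(X = k) ≥ c · min{1, 1/σ}. -/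
open Finset

/-- Probability mass function of the Poisson binomial distribution: the
probability that the sum of `n` independent Bernoulli trials with success
probabilities `p 0, …, p (n-1)` equals `j`. -/
noncomputable def poissonBinomPMF (n : ℕ) (p : Fin n → ℝ) (j : ℕ) : ℝ :=
  ∑ s ∈ Finset.powersetCard j (Finset.univ : Finset (Fin n)),
    (∏ i ∈ s, p i) * ∏ i ∈ sᶜ, (1 - p i)

section PBG

variable {α : Type*} [DecidableEq α]


noncomputable def pbg (p : α → ℝ) (s : Finset α) (j : ℕ) : ℝ :=
  ∑ t ∈ s.powersetCard j, (∏ i ∈ t, p i) * ∏ i ∈ s \ t, (1 - p i)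

lemma pbg_vanish (p : α → ℝ) {s : Finset α} {j : ℕ} (h : s.card < j) : pbg p s j = 0 := by
  simp [pbg, Finset.powersetCard_eq_empty.2 h]

lemma pbg_empty (p : α → ℝ) (j : ℕ) : pbg p ∅ j = if j = 0 then 1 else 0 := by
  rcases j with _ | j
  · simp [pbg]
  · rw [pbg_vanish p (by simp)]; rfl

lemma pbg_insert_zero (p : α → ℝ) {a : α} {s : Finset α} (ha : a ∉ s) :
    pbg p (insert a s) 0 = (1 - p a) * pbg p s 0 := by
  simp only [pbg, powersetCard_zero, sum_singleton, prod_empty, one_mul, sdiff_empty]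
  rw [Finset.prod_insert ha]

lemma pbg_insert_succ (p : α → ℝ) {a : α} {s : Finset α} (ha : a ∉ s) (j : ℕ) :
    pbg p (insert a s) (j + 1) = p a * pbg p s j + (1 - p a) * pbg p s (j + 1) := by
  have hdisj : Disjoint (s.powersetCard (j+1)) ((s.powersetCard j).image (insert a)) := by
    rw [Finset.disjoint_left]
    intro t ht ht'
    obtain ⟨t₀, ht₀, rfl⟩ := Finset.mem_image.1 ht'
    exact ha ((Finset.mem_powersetCard.1 ht).1 (Finset.mem_insert_self a t₀))
  rw [pbg, powersetCard_succ_insert ha, Finset.sum_union hdisj, Finset.sum_image]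
  · have h1 : ∑ t ∈ s.powersetCard (j+1), (∏ i ∈ t, p i) * ∏ i ∈ insert a s \ t, (1 - p i)
        = (1 - p a) * pbg p s (j+1) := by
      rw [pbg, Finset.mul_sum]
      refine Finset.sum_congr rfl fun t ht => ?_
      have hat : a ∉ t := fun h => ha ((Finset.mem_powersetCard.1 ht).1 h)
      rw [Finset.insert_sdiff_of_notMem _ hat, Finset.prod_insert (by simp [ha])]
      ring
    have h2 : ∑ t ∈ s.powersetCard j, (∏ i ∈ insert a t, p i) * ∏ i ∈ insert a s \ insert a t, (1 - p i)
        = p a * pbg p s j := by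
      rw [pbg, Finset.mul_sum]
      refine Finset.sum_congr rfl fun t ht => ?_
      have hat : a ∉ t := fun h => ha ((Finset.mem_powersetCard.1 ht).1 h)
      have hset : insert a s \ insert a t = s \ t := by
        ext x
        simp only [Finset.mem_sdiff, Finset.mem_insert]
        constructor
        · rintro ⟨hx1 | hx1, hx2⟩
          · exact absurd (Or.inl hx1) hx2
          · exact ⟨hx1, fun h => hx2 (Or.inr h)⟩
        · rintro ⟨hx1, hx2⟩
          exact ⟨Or.inr hx1, by rintro (rfl | h); exacts [ha hx1, hx2 h]⟩
      rw [hset, Finset.prod_insert hat]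
      ring
    rw [h1, h2]; ring
  · intro t ht t' ht' hins
    have hat : a ∉ t := fun h => ha ((Finset.mem_powersetCard.1 ht).1 h)
    have hat' : a ∉ t' := fun h => ha ((Finset.mem_powersetCard.1 ht').1 h)
    have := congrArg (fun u => Finset.erase u a) hins
    simpa [Finset.erase_insert hat, Finset.erase_insert hat'] using this

lemma pbg_nonneg {p : α → ℝ} (hp : ∀ i, 0 ≤ p i ∧ p i ≤ 1) (s : Finset α) (j : ℕ) :
    0 ≤ pbg p s j := by
  refine Finset.sum_nonneg fun t _ => mul_nonneg (Finset.prod_nonneg fun i _ => (hp i).1)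
    (Finset.prod_nonneg fun i _ => by linarith [(hp i).2])


lemma pbg_moments {p : α → ℝ} (s : Finset α) :
    ∀ N, s.card < N →
      (∑ j ∈ range N, pbg p s j) = 1 ∧
      (∑ j ∈ range N, (j : ℝ) * pbg p s j) = ∑ i ∈ s, p i ∧
      (∑ j ∈ range N, (j : ℝ)^2 * pbg p s j)
        = (∑ i ∈ s, p i)^2 + ∑ i ∈ s, p i * (1 - p i) := by
  induction s using Finset.induction_on with
  | empty =>
    intro N hN
    have h0 : 0 < N := hN
    have : ∀ f : ℕ → ℝ, (∑ j ∈ range N, f j * pbg p ∅ j) = f 0 * 1 := by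
      intro f
      rw [Finset.sum_eq_single 0]
      · rw [pbg_empty]; simp
      · intro b _ hb; rw [pbg_empty]; simp [hb]
      · intro h; exact absurd (Finset.mem_range.2 h0) h
    refine ⟨?_, ?_, ?_⟩
    · simpa using this (fun _ => 1)
    · simpa using this (fun j => (j:ℝ))
    · simpa using (this (fun j => (j:ℝ)^2)).trans (by norm_num)
  | @insert a s ha ih =>
    intro N hN
    rw [Finset.card_insert_of_notMem ha] at hN
    obtain ⟨M, rfl⟩ : ∃ M, N = M + 1 := ⟨N - 1, by omega⟩
    have hM : s.card < M := by omega
    obtain ⟨hA0, hA1, hA2⟩ := ih M hM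
    obtain ⟨hB0, hB1, hB2⟩ := ih (M+1) (by omega)
    have hsplit : ∀ f : ℕ → ℝ,
        (∑ j ∈ range (M+1), f j * pbg p (insert a s) j)
        = p a * (∑ j ∈ range M, f (j+1) * pbg p s j)
          + (1 - p a) * (∑ j ∈ range (M+1), f j * pbg p s j) := by
      intro f
      rw [Finset.sum_range_succ' (fun j => f j * pbg p (insert a s) j) M]
      rw [Finset.sum_range_succ' (fun j => f j * pbg p s j) M]
      simp only [pbg_insert_succ p ha, pbg_insert_zero p ha]
      rw [Finset.sum_congr rfl (fun j _ => show
        f (j+1) * (p a * pbg p s j + (1 - p a) * pbg p s (j+1))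
          = p a * (f (j+1) * pbg p s j) + (1 - p a) * (f (j+1) * pbg p s (j+1)) from by ring),
        Finset.sum_add_distrib, ← Finset.mul_sum, ← Finset.mul_sum]
      ring
    have e0 := hsplit (fun _ => 1)
    have e1 := hsplit (fun j => (j:ℝ))
    have e2 := hsplit (fun j => (j:ℝ)^2)
    simp only [one_mul] at e0
    have hshift1 : (∑ j ∈ range M, ((j:ℝ)+1) * pbg p s j)
        = (∑ j ∈ range M, (j:ℝ) * pbg p s j) + ∑ j ∈ range M, pbg p s j := by
      rw [← Finset.sum_add_distrib]; exact Finset.sum_congr rfl fun j _ => by ring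
    have hv : pbg p s M = 0 := pbg_vanish p (by omega)
    have hA0' : (∑ j ∈ range M, pbg p s j) = 1 := hA0
    have hA1' : (∑ j ∈ range M, (j:ℝ) * pbg p s j) = ∑ i ∈ s, p i := hA1
    have hA2' : (∑ j ∈ range M, (j:ℝ)^2 * pbg p s j)
        = (∑ i ∈ s, p i)^2 + ∑ i ∈ s, p i * (1-p i) := hA2
    refine ⟨?_, ?_, ?_⟩
    · rw [e0, hA0', hB0]; ring
    · push_cast at e1 ⊢
      rw [e1]
      have : (∑ j ∈ range M, ((j:ℝ)+1) * pbg p s j) = (∑ i ∈ s, p i) + 1 := by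
        rw [hshift1, hA1', hA0']
      rw [this, hB1, Finset.sum_insert ha]
      ring
    · push_cast at e2 ⊢
      rw [e2]
      have hsq : (∑ j ∈ range M, ((j:ℝ)+1)^2 * pbg p s j)
          = ((∑ i ∈ s, p i)^2 + ∑ i ∈ s, p i * (1-p i)) + 2 * (∑ i ∈ s, p i) + 1 := by
        have : (∑ j ∈ range M, ((j:ℝ)+1)^2 * pbg p s j)
            = (∑ j ∈ range M, (j:ℝ)^2 * pbg p s j) + 2*(∑ j ∈ range M, (j:ℝ) * pbg p s j)
              + ∑ j ∈ range M, pbg p s j := by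
          rw [Finset.mul_sum, ← Finset.sum_add_distrib, ← Finset.sum_add_distrib]
          exact Finset.sum_congr rfl fun j _ => by ring
        rw [this, hA2', hA1', hA0']
      rw [hsq, hB2, Finset.sum_insert ha, Finset.sum_insert ha]
      ring

noncomputable def pbgZ (p : α → ℝ) (s : Finset α) (j : ℤ) : ℝ :=
  if 0 ≤ j then pbg p s j.toNat else 0

lemma pbgZ_nonneg {p : α → ℝ} (hp : ∀ i, 0 ≤ p i ∧ p i ≤ 1) (s : Finset α) (j : ℤ) :
    0 ≤ pbgZ p s j := by
  unfold pbgZ; split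
  · exact pbg_nonneg hp s _
  · exact le_refl 0

lemma pbgZ_insert (p : α → ℝ) {a : α} {s : Finset α} (ha : a ∉ s) (j : ℤ) :
    pbgZ p (insert a s) j = p a * pbgZ p s (j - 1) + (1 - p a) * pbgZ p s j := by
  rcases lt_trichotomy j 0 with hj | hj | hj
  · have h1 : ¬ (0:ℤ) ≤ j := by omega
    have h2 : ¬ (0:ℤ) ≤ j - 1 := by omega
    simp [pbgZ, h1, h2]
    intro h; exfalso; omega
  · subst hj
    have h2 : ¬ (0:ℤ) ≤ (0:ℤ) - 1 := by omega
    simp [pbgZ, h2, pbg_insert_zero p ha]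
  · obtain ⟨m, rfl⟩ : ∃ m : ℕ, j = (m : ℤ) + 1 := ⟨(j-1).toNat, by omega⟩
    have h1 : (0:ℤ) ≤ (m:ℤ) + 1 := by omega
    have h2 : (0:ℤ) ≤ (m:ℤ) + 1 - 1 := by omega
    have e1 : ((m:ℤ) + 1).toNat = m + 1 := by omega
    have e2 : ((m:ℤ) + 1 - 1).toNat = m := by omega
    simp only [pbgZ, if_pos h1, if_pos h2, e1, e2]
    exact pbg_insert_succ p ha m

/-- interval support and log-concavity over ℤ -/
lemma pbgZ_lc {p : α → ℝ} (hp : ∀ i, 0 ≤ p i ∧ p i ≤ 1) (s : Finset α) :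
    (∀ i k j : ℤ, i ≤ k → k ≤ j → 0 < pbgZ p s i → 0 < pbgZ p s j → 0 < pbgZ p s k) ∧
    (∀ j : ℤ, pbgZ p s (j-1) * pbgZ p s (j+1) ≤ pbgZ p s j ^ 2) := by
  induction s using Finset.induction_on with
  | empty =>
    have h : ∀ j : ℤ, pbgZ p ∅ j = if j = 0 then 1 else 0 := by
      intro j
      unfold pbgZ
      split
      · rw [pbg_empty]
        rename_i h
        by_cases hj : j = 0 <;> simp [hj]
        omega
      · rename_i h
        rw [if_neg (by omega)]
    constructor
    · intro i k j hik hkj hi hj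
      rw [h] at hi hj ⊢
      split at hi
      · split at hj
        · rename_i h1 h2
          have : k = 0 := by omega
          simp [this]
        · norm_num at hj
      · norm_num at hi
    · intro j
      rw [h, h, h]
      rcases eq_or_ne j 0 with rfl | hj
      · norm_num
      · rw [if_neg hj]
        have h1 : ((if j - 1 = 0 then (1:ℝ) else 0)) * (if j + 1 = 0 then (1:ℝ) else 0) = 0 := by
          rcases eq_or_ne (j-1) 0 with h1 | h1
          · rw [if_neg (show j+1 ≠ 0 by omega), mul_zero]
          · rw [if_neg h1, zero_mul]
        rw [h1]; norm_num
  | @insert a s ha ih =>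
    obtain ⟨hint, hlc⟩ := ih
    set A := pbgZ p s with hA
    have hAnn : ∀ j, 0 ≤ A j := pbgZ_nonneg hp s
    have hrec : ∀ j, pbgZ p (insert a s) j = p a * A (j-1) + (1 - p a) * A j :=
      pbgZ_insert p ha
    have hpa0 : 0 ≤ p a := (hp a).1
    have hqa0 : 0 ≤ 1 - p a := by linarith [(hp a).2]
    -- cross inequality
    have hcross : ∀ j : ℤ, A (j-2) * A (j+1) ≤ A (j-1) * A j := by
      intro j
      rcases eq_or_lt_of_le (hAnn (j-2)) with h2 | h2
      · nlinarith [hAnn (j+1), hAnn (j-1), hAnn j]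
      · rcases eq_or_lt_of_le (hAnn (j+1)) with h1 | h1
        · nlinarith [hAnn (j-1), hAnn j]
        · have hm1 : 0 < A (j-1) := hint (j-2) (j-1) (j+1) (by omega) (by omega) h2 h1
          have hm0 : 0 < A j := hint (j-2) j (j+1) (by omega) (by omega) h2 h1
          have l1 := hlc (j-1)
          have l2 := hlc j
          have e1 : (j:ℤ) - 1 - 1 = j - 2 := by ring
          have e2 : (j:ℤ) - 1 + 1 = j := by ring
          rw [e1, e2] at l1
          nlinarith
    constructor
    · intro i k j hik hkj hbi hbj
      rw [hrec] at hbi hbj ⊢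
      have hi' : 0 < p a * A (i-1) ∨ 0 < (1 - p a) * A i := by
        by_contra hcon
        push_neg at hcon
        have := mul_nonneg hpa0 (hAnn (i-1))
        have := mul_nonneg hqa0 (hAnn i)
        linarith [hcon.1, hcon.2]
      have hj' : 0 < p a * A (j-1) ∨ 0 < (1 - p a) * A j := by
        by_contra hcon
        push_neg at hcon
        have := mul_nonneg hpa0 (hAnn (j-1))
        have := mul_nonneg hqa0 (hAnn j)
        linarith [hcon.1, hcon.2]
      have keyq : ∀ m, 0 < (1 - p a) * A m → 0 < 1 - p a ∧ 0 < A m := by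
        intro m hm
        constructor
        · by_contra h; push_neg at h
          nlinarith [hAnn m]
        · by_contra h; push_neg at h
          nlinarith
      have keyp : ∀ m, 0 < p a * A m → 0 < p a ∧ 0 < A m := by
        intro m hm
        constructor
        · by_contra h; push_neg at h; nlinarith [hAnn m]
        · by_contra h; push_neg at h; nlinarith
      have bound : 0 < p a * A (k-1) ∨ 0 < (1 - p a) * A k := by
        rcases hi' with hi1 | hi1 <;> rcases hj' with hj1 | hj1
        · -- pa side both
          obtain ⟨hpa, hAi⟩ := keyp _ hi1
          obtain ⟨_, hAj⟩ := keyp _ hj1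
          exact Or.inl (mul_pos hpa (hint (i-1) (k-1) (j-1) (by omega) (by omega) hAi hAj))
        · -- pa at i, qa at j : A(i-1) > 0, A j > 0, k-1 ∈ [i-1, j]
          obtain ⟨hpa, hAi⟩ := keyp _ hi1
          obtain ⟨_, hAj⟩ := keyq _ hj1
          exact Or.inl (mul_pos hpa (hint (i-1) (k-1) j (by omega) (by omega) hAi hAj))
        · -- qa at i, pa at j : A i > 0, A (j-1) > 0
          obtain ⟨hqa, hAi⟩ := keyq _ hi1
          obtain ⟨hpa, hAj⟩ := keyp _ hj1
          rcases eq_or_lt_of_le hkj with rfl | hlt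
          · exact Or.inl (mul_pos hpa hAj)
          · exact Or.inr (mul_pos hqa (hint i k (j-1) hik (by omega) hAi hAj))
        · obtain ⟨hqa, hAi⟩ := keyq _ hi1
          obtain ⟨_, hAj⟩ := keyq _ hj1
          exact Or.inr (mul_pos hqa (hint i k j hik hkj hAi hAj))
      rcases bound with h | h
      · have := mul_nonneg hqa0 (hAnn k); linarith
      · have := mul_nonneg hpa0 (hAnn (k-1)); linarith
    · intro j
      rw [hrec, hrec, hrec]
      have e1 : (j:ℤ) - 1 - 1 = j - 2 := by ring
      have e2 : (j:ℤ) + 1 - 1 = j := by ring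
      rw [e1, e2]
      have l1 := hlc (j-1)
      have l2 := hlc j
      rw [e1, show (j:ℤ) - 1 + 1 = j from by ring] at l1
      have hc := hcross j
      nlinarith [mul_nonneg hpa0 hqa0, mul_nonneg (mul_nonneg hpa0 hpa0) (sub_nonneg.2 l1),
        mul_nonneg (mul_nonneg hqa0 hqa0) (sub_nonneg.2 l2),
        mul_nonneg (mul_nonneg hpa0 hqa0) (sub_nonneg.2 hc)]

end PBG

lemma valley (q : ℕ → ℝ) (hq0 : ∀ j, 0 ≤ q j)
    (hlc : ∀ j, q j * q (j+2) ≤ q (j+1)^2)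
    (hint : ∀ i k j : ℕ, i ≤ k → k ≤ j → 0 < q i → 0 < q j → 0 < q k)
    (a b k : ℕ) (hak : a ≤ k) (hkb : k ≤ b) (hqa : 0 < q a) (hqb : 0 < q b) :
    min (q a) (q b) ≤ q k := by
  have hpos : ∀ m, a ≤ m → m ≤ b → 0 < q m := fun m h1 h2 => hint a m b h1 h2 hqa hqb
  have hcross : ∀ i, a ≤ i → ∀ j, i ≤ j → j + 1 ≤ b → q i * q (j+1) ≤ q (i+1) * q j := by
    intro i hai j
    induction j with
    | zero => intro hij _; interval_cases i; exact le_of_eq (mul_comm _ _)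
    | succ j ihj =>
      intro hij hjb
      rcases Nat.lt_or_ge i (j+1) with hij' | hij'
      · have hij2 : i ≤ j := by omega
        have IH := ihj hij2 (by omega)
        have hIH2 : (q i * q (j+1)) * (q j * q (j+2)) ≤ (q (i+1) * q j) * (q (j+1)^2) :=
          mul_le_mul IH (hlc j) (mul_nonneg (hq0 j) (hq0 (j+2)))
            (mul_nonneg (hq0 (i+1)) (hq0 j))
        have hj1 : 0 < q j := hpos j (by omega) (by omega)
        have hj2 : 0 < q (j+1) := hpos (j+1) (by omega) (by omega)
        nlinarith [hIH2, mul_pos hj1 hj2]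
      · have : i = j + 1 := by omega
        subst this
        exact le_of_eq (mul_comm _ _)
  by_cases hmono : ∀ m, a ≤ m → m < k → q m ≤ q (m+1)
  · have : q a ≤ q k := by
      have : ∀ m, a ≤ m → m ≤ k → q a ≤ q m := by
        intro m ham
        induction m with
        | zero =>
          intro _
          have h0 : a = 0 := by omega
          subst h0; exact le_refl _
        | succ m ihm =>
          intro hmk
          rcases Nat.lt_or_ge a (m+1) with h | h
          · exact le_trans (ihm (by omega) (by omega)) (hmono m (by omega) (by omega))
          · have : a = m + 1 := by omega
            rw [this]
      exact this k hak (le_refl k)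
    exact le_trans (min_le_left _ _) this
  · push_neg at hmono
    obtain ⟨m, ham, hmk, hdec⟩ := hmono
    have hstep : ∀ j, k ≤ j → j + 1 ≤ b → q (j+1) ≤ q j := by
      intro j hkj hjb
      have hc := hcross m ham j (by omega) hjb
      have hqm : 0 < q m := hpos m ham (by omega)
      have hqj : 0 < q j := hpos j (by omega) (by omega)
      nlinarith [hc, mul_pos hqm hqj]
    have : q b ≤ q k := by
      have : ∀ j, k ≤ j → j ≤ b → q j ≤ q k := by
        intro j hkj
        induction j with
        | zero =>
          intro _
          have h0 : k = 0 := by omega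
          subst h0; exact le_refl _
        | succ j ihj =>
          intro hjb
          rcases Nat.lt_or_ge k (j+1) with h | h
          · exact le_trans (hstep j (by omega) (by omega)) (ihj (by omega) (by omega))
          · have : k = j + 1 := by omega
            rw [this]
      exact this b hkb (le_refl b)
    exact le_trans (min_le_right _ _) this

set_option maxHeartbeats 1000000 in
lemma main_abstract (l u : ℝ) (hl0 : 0 < l) (hl1 : l < 1) (hu0 : 0 < u) (hu1 : u < 1)
    (hlu : l + u < 1) (n : ℕ) (q : ℕ → ℝ)
    (hq0 : ∀ j, 0 ≤ q j)
    (hsum : ∑ j ∈ range (n+1), q j = 1)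
    (μ V : ℝ)
    (hμ : μ = ∑ j ∈ range (n+1), (j:ℝ) * q j)
    (hV : V = ∑ j ∈ range (n+1), ((j:ℝ) - μ)^2 * q j)
    (hlcq : ∀ j : ℕ, q j * q (j+2) ≤ q (j+1)^2)
    (hiq : ∀ i k j : ℕ, i ≤ k → k ≤ j → 0 < q i → 0 < q j → 0 < q k)
    (k : ℕ)
    (hk1 : sInf {i : ℕ | l ≤ ∑ j ∈ Finset.range (i + 1), q j} ≤ k)
    (hk2 : k ≤ sSup {i : ℕ | i ≤ n ∧ u ≤ ∑ j ∈ Finset.Icc i n, q j}) :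
    (min l u / 2) / (2 * Real.sqrt (2 / min l (min u (1 - l - u))) + 2)
      * min 1 (1 / Real.sqrt V) ≤ q k := by
  set ε := min l (min u (1 - l - u)) with hεdef
  have hε0 : 0 < ε := lt_min hl0 (lt_min hu0 (by linarith))
  have hεl : ε ≤ l := min_le_left _ _
  have hεu : ε ≤ u := le_trans (min_le_right _ _) (min_le_left _ _)
  have hεlu : ε ≤ 1 - l - u := le_trans (min_le_right _ _) (min_le_right _ _)
  set t := Real.sqrt (2 / ε) with htdef
  have ht0 : 0 < t := Real.sqrt_pos.2 (by positivity)
  have ht2 : t^2 = 2/ε := Real.sq_sqrt (by positivity)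
  set σ := Real.sqrt V with hσdef
  have hV0 : 0 ≤ V := by
    rw [hV]; exact Finset.sum_nonneg fun j _ => mul_nonneg (sq_nonneg _) (hq0 j)
  rcases eq_or_lt_of_le hV0 with hV0' | hVpos
  · have hσ0 : σ = 0 := by rw [hσdef, ← hV0', Real.sqrt_zero]
    rw [hσ0]
    simp only [div_zero, min_comm, min_eq_left (zero_le_one), mul_zero]
    exact hq0 k
  have hσpos : 0 < σ := Real.sqrt_pos.2 hVpos
  have hσ2 : σ^2 = V := Real.sq_sqrt hV0
  have hts : 0 < t * σ := mul_pos ht0 hσpos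
  -- split identity
  have hIcc0 : ∀ i, i ≤ n + 1 → (∑ j ∈ range i, q j) + ∑ j ∈ Icc i n, q j = 1 := by
    intro i hi
    rw [← Finset.Ico_add_one_right_eq_Icc, Finset.range_eq_Ico, ← hsum, Finset.range_eq_Ico]
    exact Finset.sum_Ico_consecutive q (Nat.zero_le i) hi
  -- Chebyshev
  have cheb : ∀ F : Finset ℕ, F ⊆ range (n+1) → (∀ j ∈ F, t * σ ≤ |(j:ℝ) - μ|) →
      ∑ j ∈ F, q j ≤ ε/2 := by
    intro F hF habs
    have h1 : ∑ j ∈ F, q j ≤ ∑ j ∈ F, ((j:ℝ)-μ)^2 / (t*σ)^2 * q j := by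
      refine Finset.sum_le_sum fun j hj => ?_
      have h2 : (t*σ)^2 ≤ ((j:ℝ)-μ)^2 := by
        calc (t*σ)^2 = |t*σ|^2 := by rw [abs_of_pos hts]
        _ ≤ |(j:ℝ)-μ|^2 := by
            have h9 : |t*σ| ≤ |(j:ℝ)-μ| := by rw [abs_of_pos hts]; exact habs j hj
            exact pow_le_pow_left₀ (abs_nonneg _) h9 2
        _ = ((j:ℝ)-μ)^2 := sq_abs _
      have h3 : (1:ℝ) ≤ ((j:ℝ)-μ)^2/(t*σ)^2 := (one_le_div (by positivity)).2 h2
      calc q j = 1 * q j := (one_mul _).symm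
      _ ≤ ((j:ℝ)-μ)^2/(t*σ)^2 * q j := mul_le_mul_of_nonneg_right h3 (hq0 j)
    have h4 : ∑ j ∈ F, ((j:ℝ)-μ)^2/(t*σ)^2 * q j
        ≤ ∑ j ∈ range (n+1), ((j:ℝ)-μ)^2/(t*σ)^2 * q j :=
      Finset.sum_le_sum_of_subset_of_nonneg hF
        (fun j _ _ => mul_nonneg (by positivity) (hq0 j))
    have h5 : ∑ j ∈ range (n+1), ((j:ℝ)-μ)^2/(t*σ)^2 * q j = V / (t*σ)^2 := by
      rw [hV, Finset.sum_div]; exact Finset.sum_congr rfl fun j _ => by ring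
    have h6 : V / (t*σ)^2 = ε/2 := by
      rw [mul_pow, ht2, ← hσ2]
      field_simp
    linarith
  -- mean bounds
  have hμ0 : 0 ≤ μ := by
    rw [hμ]; exact Finset.sum_nonneg fun j _ => mul_nonneg (Nat.cast_nonneg j) (hq0 j)
  have hμn : μ ≤ n := by
    rw [hμ]
    calc ∑ j ∈ range (n+1), (j:ℝ) * q j ≤ ∑ j ∈ range (n+1), (n:ℝ) * q j := by
          refine Finset.sum_le_sum fun j hj => mul_le_mul_of_nonneg_right ?_ (hq0 j)
          exact_mod_cast Nat.lt_succ_iff.1 (Finset.mem_range.1 hj)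
    _ = n := by rw [← Finset.mul_sum, hsum, mul_one]
  -- quantile facts
  set kl := sInf {i : ℕ | l ≤ ∑ j ∈ Finset.range (i + 1), q j} with hkldef
  have hklmem : l ≤ ∑ j ∈ range (kl+1), q j :=
    Nat.sInf_mem (⟨n, by simp only [Set.mem_setOf_eq, hsum]; exact hl1.le⟩ :
      Set.Nonempty {i : ℕ | l ≤ ∑ j ∈ Finset.range (i + 1), q j})
  have hkln : kl ≤ n := Nat.sInf_le (by simp only [Set.mem_setOf_eq, hsum]; exact hl1.le)
  have hklmin : ∀ m, m < kl → ¬ (l ≤ ∑ j ∈ range (m+1), q j) := by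
    intro m hm
    exact Nat.notMem_of_lt_sInf hm
  set ku := sSup {i : ℕ | i ≤ n ∧ u ≤ ∑ j ∈ Finset.Icc i n, q j} with hkudef
  have hSubdd : BddAbove {i : ℕ | i ≤ n ∧ u ≤ ∑ j ∈ Finset.Icc i n, q j} :=
    ⟨n, fun x hx => hx.1⟩
  have h0Su : 0 ∈ {i : ℕ | i ≤ n ∧ u ≤ ∑ j ∈ Finset.Icc i n, q j} := by
    refine ⟨Nat.zero_le n, ?_⟩
    have h := hIcc0 0 (by omega)
    rw [Finset.range_zero, Finset.sum_empty, zero_add] at h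
    rw [h]; exact hu1.le
  have hkumem : ku ≤ n ∧ u ≤ ∑ j ∈ Finset.Icc ku n, q j := Nat.sSup_mem ⟨0, h0Su⟩ hSubdd
  have hkumax : ∀ m, m ≤ n → u ≤ ∑ j ∈ Finset.Icc m n, q j → m ≤ ku :=
    fun m h1 h2 => le_csSup hSubdd ⟨h1, h2⟩
  -- C1
  have hC1 : μ - t*σ ≤ (kl:ℝ) := by
    by_contra hcon
    push_neg at hcon
    have hF : ∑ j ∈ range (kl+1), q j ≤ ε/2 := by
      refine cheb _ (fun x hx => Finset.mem_range.2 (by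
        have := Finset.mem_range.1 hx; omega)) (fun j hj => ?_)
      have hjkl : (j:ℝ) ≤ kl := by exact_mod_cast Nat.lt_succ_iff.1 (Finset.mem_range.1 hj)
      refine le_abs.2 (Or.inr ?_)
      linarith
    linarith
  -- C3
  have hC3 : (kl:ℝ) < μ + t*σ + 1 := by
    by_contra hcon
    push_neg at hcon
    have hkl1 : 1 ≤ kl := by
      by_contra h
      push_neg at h
      interval_cases kl
      · simp only [Nat.cast_zero] at hcon; linarith
    have htail : ∑ j ∈ Icc kl n, q j ≤ ε/2 := by
      refine cheb _ (fun x hx => Finset.mem_range.2 (by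
        have := (Finset.mem_Icc.1 hx).2; omega)) (fun j hj => ?_)
      have : (kl:ℝ) ≤ (j:ℝ) := by exact_mod_cast (Finset.mem_Icc.1 hj).1
      refine le_abs.2 (Or.inl ?_)
      linarith
    have hsplit := hIcc0 kl (by omega)
    have hcdf : l ≤ ∑ j ∈ range kl, q j := by linarith
    have hmem : l ≤ ∑ j ∈ range ((kl - 1) + 1), q j := by
      have he : kl - 1 + 1 = kl := by omega
      rw [he]
      exact hcdf
    exact hklmin (kl - 1) (by omega) hmem
  -- C2
  have hC2 : (ku:ℝ) < μ + t*σ := by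
    by_contra hcon
    push_neg at hcon
    have htail : ∑ j ∈ Icc ku n, q j ≤ ε/2 := by
      refine cheb _ (fun x hx => Finset.mem_range.2 (by
        have := (Finset.mem_Icc.1 hx).2; omega)) (fun j hj => ?_)
      have : (ku:ℝ) ≤ (j:ℝ) := by exact_mod_cast (Finset.mem_Icc.1 hj).1
      refine le_abs.2 (Or.inl ?_)
      linarith
    linarith [hkumem.2]
  -- C4
  have hC4 : μ - t*σ - 1 < (ku:ℝ) := by
    by_contra hcon
    push_neg at hcon
    have hkun' : ku < n := by
      rcases eq_or_lt_of_le hkumem.1 with h | h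
      · exfalso
        rw [h] at hcon
        linarith
      · exact h
    have hhead : ∑ j ∈ range (ku+1), q j ≤ ε/2 := by
      refine cheb _ (fun x hx => Finset.mem_range.2 (by
        have := Finset.mem_range.1 hx; omega)) (fun j hj => ?_)
      have : (j:ℝ) ≤ ku := by exact_mod_cast Nat.lt_succ_iff.1 (Finset.mem_range.1 hj)
      refine le_abs.2 (Or.inr ?_)
      linarith
    have hsplit := hIcc0 (ku+1) (by omega)
    have : ku + 1 ≤ ku := hkumax (ku+1) (by omega) (by linarith)
    omega
  -- left window
  set j0 := ⌈μ - t*σ⌉₊ with hj0def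
  have hj0kl : j0 ≤ kl := Nat.ceil_le.2 hC1
  have hj0low : μ - t*σ ≤ (j0:ℝ) := Nat.le_ceil _
  have hheadj0 : ∑ j ∈ range j0, q j ≤ ε/2 := by
    refine cheb _ (fun x hx => Finset.mem_range.2 (by
      have := Finset.mem_range.1 hx; omega)) (fun j hj => ?_)
    have : (j:ℝ) < μ - t*σ := Nat.lt_ceil.1 (Finset.mem_range.1 hj)
    refine le_abs.2 (Or.inr ?_)
    linarith
  have hsplitL : (∑ j ∈ range j0, q j) + ∑ j ∈ Icc j0 kl, q j = ∑ j ∈ range (kl+1), q j := by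
    rw [← Finset.Ico_add_one_right_eq_Icc, Finset.range_eq_Ico, Finset.range_eq_Ico]
    exact Finset.sum_Ico_consecutive q (Nat.zero_le j0) (Nat.le_succ_of_le hj0kl)
  have hmassL : l/2 ≤ ∑ j ∈ Icc j0 kl, q j := by linarith
  have hcardL : ((kl + 1 - j0 : ℕ):ℝ) ≤ 2*(t*σ) + 2 := by
    have hle : j0 ≤ kl + 1 := by omega
    have hc : ((kl + 1 - j0 : ℕ):ℝ) = (kl:ℝ) + 1 - j0 := by
      push_cast [Nat.cast_sub hle]
      ring
    rw [hc]
    linarith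
  have hβl : (0:ℝ) < (l/2)/(2*(t*σ)+2) := by positivity
  obtain ⟨js, hjs1, hjs2, hjsval⟩ :
      ∃ js, j0 ≤ js ∧ js ≤ kl ∧ (l/2)/(2*(t*σ)+2) ≤ q js := by
    by_contra hcon
    push_neg at hcon
    have hlt : ∑ j ∈ Icc j0 kl, q j < ∑ _j ∈ Icc j0 kl, (l/2)/(2*(t*σ)+2) := by
      refine Finset.sum_lt_sum_of_nonempty (Finset.nonempty_Icc.2 hj0kl) fun j hj => ?_
      exact hcon j (Finset.mem_Icc.1 hj).1 (Finset.mem_Icc.1 hj).2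
    rw [Finset.sum_const, Nat.card_Icc, nsmul_eq_mul] at hlt
    have h7 : ((kl + 1 - j0:ℕ):ℝ) * ((l/2)/(2*(t*σ)+2)) ≤ (2*(t*σ)+2) * ((l/2)/(2*(t*σ)+2)) :=
      mul_le_mul_of_nonneg_right hcardL hβl.le
    have h8 : (2*(t*σ)+2) * ((l/2)/(2*(t*σ)+2)) = l/2 := by
      field_simp
    linarith
  -- right window
  set j1 := min ⌊μ + t*σ⌋₊ n with hj1def
  have hkuj1 : ku ≤ j1 := le_min (Nat.le_floor hC2.le) hkumem.1
  have hj1n : j1 ≤ n := min_le_right _ _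
  have hj1up : (j1:ℝ) ≤ μ + t*σ := by
    refine le_trans ?_ (Nat.floor_le (by positivity))
    exact_mod_cast min_le_left _ _
  have htailj1 : ∑ j ∈ Icc (j1+1) n, q j ≤ ε/2 := by
    refine cheb _ (fun x hx => Finset.mem_range.2 (by
      have := (Finset.mem_Icc.1 hx).2; omega)) (fun j hj => ?_)
    have hj' := Finset.mem_Icc.1 hj
    have hfloor : ⌊μ + t*σ⌋₊ < j := by
      rcases Nat.lt_or_ge ⌊μ + t*σ⌋₊ j with h | h
      · exact h
      · exfalso
        have : j1 = n := by omega
        omega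
    have : μ + t*σ < (j:ℝ) := (Nat.floor_lt (by positivity)).1 hfloor
    refine le_abs.2 (Or.inl ?_)
    linarith
  have hsplitR : (∑ j ∈ Icc ku j1, q j) + ∑ j ∈ Icc (j1+1) n, q j = ∑ j ∈ Icc ku n, q j := by
    rw [← Finset.Ico_add_one_right_eq_Icc, ← Finset.Ico_add_one_right_eq_Icc, ← Finset.Ico_add_one_right_eq_Icc]
    exact Finset.sum_Ico_consecutive q (by omega) (by omega)
  have hmassR : u/2 ≤ ∑ j ∈ Icc ku j1, q j := by linarith [hkumem.2]
  have hcardR : ((j1 + 1 - ku : ℕ):ℝ) ≤ 2*(t*σ) + 2 := by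
    have hle : ku ≤ j1 + 1 := by omega
    have hc : ((j1 + 1 - ku : ℕ):ℝ) = (j1:ℝ) + 1 - ku := by
      push_cast [Nat.cast_sub hle]
      ring
    rw [hc]
    linarith
  have hβu : (0:ℝ) < (u/2)/(2*(t*σ)+2) := by positivity
  obtain ⟨jt, hjt1, hjt2, hjtval⟩ :
      ∃ jt, ku ≤ jt ∧ jt ≤ j1 ∧ (u/2)/(2*(t*σ)+2) ≤ q jt := by
    by_contra hcon
    push_neg at hcon
    have hlt : ∑ j ∈ Icc ku j1, q j < ∑ _j ∈ Icc ku j1, (u/2)/(2*(t*σ)+2) := by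
      refine Finset.sum_lt_sum_of_nonempty (Finset.nonempty_Icc.2 hkuj1) fun j hj => ?_
      exact hcon j (Finset.mem_Icc.1 hj).1 (Finset.mem_Icc.1 hj).2
    rw [Finset.sum_const, Nat.card_Icc, nsmul_eq_mul] at hlt
    have h7 : ((j1 + 1 - ku:ℕ):ℝ) * ((u/2)/(2*(t*σ)+2)) ≤ (2*(t*σ)+2) * ((u/2)/(2*(t*σ)+2)) :=
      mul_le_mul_of_nonneg_right hcardR hβu.le
    have h8 : (2*(t*σ)+2) * ((u/2)/(2*(t*σ)+2)) = u/2 := by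
      field_simp
    linarith
  -- combine via valley
  have hqjs : 0 < q js := lt_of_lt_of_le hβl hjsval
  have hqjt : 0 < q jt := lt_of_lt_of_le hβu hjtval
  have hval : min (q js) (q jt) ≤ q k :=
    valley q hq0 hlcq hiq js jt k (le_trans hjs2 hk1) (le_trans hk2 hjt1) hqjs hqjt
  have hmin2 : min ((l/2)/(2*(t*σ)+2)) ((u/2)/(2*(t*σ)+2)) ≤ q k :=
    le_trans (min_le_min hjsval hjtval) hval
  have hminD : (min l u / 2)/(2*(t*σ)+2) ≤ q k := by
    rcases le_total l u with h | h
    · rw [min_eq_left h]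
      refine le_trans ?_ hmin2
      refine le_min (le_refl _) ?_
      gcongr
    · rw [min_eq_right h]
      refine le_trans ?_ hmin2
      refine le_min ?_ (le_refl _)
      gcongr
  have hlu0 : 0 < min l u := lt_min hl0 hu0
  -- final arithmetic
  rcases le_total σ 1 with hσ1 | hσ1
  · have hm1 : min 1 (1/σ) = 1 := min_eq_left (by
      rw [le_div_iff₀ hσpos, one_mul]; exact hσ1)
    rw [hm1, mul_one]
    refine le_trans ?_ hminD
    have hden : 2*(t*σ) + 2 ≤ 2*t + 2 := by
      have h9 : t*σ ≤ t := mul_le_of_le_one_right ht0.le hσ1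
      linarith [h9]
    exact div_le_div_of_nonneg_left (by positivity) (by positivity) hden
  · have hm1 : min 1 (1/σ) = 1/σ := min_eq_right ((div_le_one hσpos).2 hσ1)
    rw [hm1]
    have heq : (min l u / 2) / (2*t+2) * (1/σ) = (min l u / 2) / ((2*t+2)*σ) := by
      rw [div_mul_div_comm, mul_one]
    rw [heq]
    refine le_trans ?_ hminD
    have hden : 2*(t*σ) + 2 ≤ (2*t+2)*σ := by
      have h9 : (1:ℝ)*2 ≤ σ*2 := mul_le_mul_of_nonneg_right hσ1 (by norm_num)
      have h10 : (2*t+2)*σ = 2*(t*σ) + σ*2 := by ring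
      linarith [h9, h10]
    exact div_le_div_of_nonneg_left (by positivity) (by positivity) hden

/-- Let `ℓ, u ∈ (0,1)` with `ℓ + u < 1`. There exists `c > 0` (depending only on
`ℓ, u`) such that for every `n ≥ 1` and all success probabilities
`p_1, …, p_n ∈ [0,1]` of independent Poisson trials with sum `X`, variance
`σ² = ∑ p_i(1−p_i)`, `k_ℓ = min{i : P(X ≤ i) ≥ ℓ}` and
`k_u = max{i : P(X ≥ i) ≥ u}`: for every `k` with `k_ℓ ≤ k ≤ k_u` it holds
that `P(X = k) ≥ c · min{1, 1/σ}`. -/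
theorem stmt_4 (l u : ℝ) (hl0 : 0 < l) (hl1 : l < 1) (hu0 : 0 < u) (hu1 : u < 1)
    (hlu : l + u < 1) :
    ∃ c : ℝ, 0 < c ∧
      ∀ (n : ℕ), 1 ≤ n → ∀ (p : Fin n → ℝ), (∀ i, p i ∈ Set.Icc (0 : ℝ) 1) →
        ∀ k : ℕ,
          sInf {i : ℕ | l ≤ ∑ j ∈ Finset.range (i + 1), poissonBinomPMF n p j} ≤ k →
          k ≤ sSup {i : ℕ | i ≤ n ∧ u ≤ ∑ j ∈ Finset.Icc i n, poissonBinomPMF n p j} →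
          poissonBinomPMF n p k
            ≥ c * min 1 (1 / Real.sqrt (∑ i, p i * (1 - p i))) := by
  refine ⟨(min l u / 2) / (2 * Real.sqrt (2 / min l (min u (1 - l - u))) + 2), ?_, ?_⟩
  · have h1 : 0 < min l u := lt_min hl0 hu0
    have h2 : 0 ≤ Real.sqrt (2 / min l (min u (1 - l - u))) := Real.sqrt_nonneg _
    positivity
  intro n _hn p hp k hk1 hk2
  have hp' : ∀ i, 0 ≤ p i ∧ p i ≤ 1 := fun i => ⟨(hp i).1, (hp i).2⟩
  have hpb : ∀ j, poissonBinomPMF n p j = pbg p (univ : Finset (Fin n)) j := by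
    intro j
    unfold poissonBinomPMF pbg
    refine Finset.sum_congr rfl fun s _ => ?_
    rw [Finset.compl_eq_univ_sdiff]
  set q : ℕ → ℝ := pbg p (univ : Finset (Fin n)) with hqdef
  simp only [hpb] at hk1 hk2 ⊢
  have hcard : (univ : Finset (Fin n)).card = n := by
    rw [Finset.card_univ, Fintype.card_fin]
  obtain ⟨hS0, hS1, hS2⟩ := pbg_moments (p := p) (univ : Finset (Fin n)) (n+1)
    (by rw [hcard]; omega)
  have hq0 : ∀ j, 0 ≤ q j := fun j => pbg_nonneg hp' _ j
  set μ : ℝ := ∑ i : Fin n, p i with hμdef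
  set V : ℝ := ∑ i : Fin n, p i * (1 - p i) with hVdef
  have hVcalc : V = ∑ j ∈ range (n+1), ((j:ℝ) - μ)^2 * q j := by
    have hexp : ∀ j ∈ range (n+1), ((j:ℝ) - μ)^2 * q j
        = (j:ℝ)^2 * q j - 2*μ*((j:ℝ)*q j) + μ^2 * q j := fun j _ => by ring
    rw [Finset.sum_congr rfl hexp, Finset.sum_add_distrib, Finset.sum_sub_distrib,
      ← Finset.mul_sum, ← Finset.mul_sum, hS0, hS1, hS2]
    ring
  -- log-concavity and interval support in ℕ
  have hZeq : ∀ j : ℕ, pbgZ p (univ : Finset (Fin n)) (j : ℤ) = q j := by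
    intro j
    simp [pbgZ]; rfl
  obtain ⟨hintZ, hlcZ⟩ := pbgZ_lc hp' (univ : Finset (Fin n))
  have hlcq : ∀ j : ℕ, q j * q (j+2) ≤ q (j+1)^2 := by
    intro j
    have h := hlcZ ((j:ℤ)+1)
    have e1 : (j:ℤ) + 1 - 1 = (j:ℤ) := by ring
    have e2 : (j:ℤ) + 1 + 1 = ((j+2:ℕ):ℤ) := by push_cast; ring
    have e3 : (j:ℤ) + 1 = ((j+1:ℕ):ℤ) := by push_cast; ring
    rw [e1, e2, e3, hZeq, hZeq, hZeq] at h
    exact h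
  have hiq : ∀ i k j : ℕ, i ≤ k → k ≤ j → 0 < q i → 0 < q j → 0 < q k := by
    intro i k j h1 h2 h3 h4
    have := hintZ (i:ℤ) (k:ℤ) (j:ℤ) (by exact_mod_cast h1) (by exact_mod_cast h2)
      (by rw [hZeq]; exact h3) (by rw [hZeq]; exact h4)
    rwa [hZeq] at this
  have := main_abstract l u hl0 hl1 hu0 hu1 hlu n q hq0 hS0 μ V hS1.symm hVcalc
    hlcq hiq k hk1 hk2
  exact this
end

section
/- Let X be an integer-valued square-integrable random variable with variance σ² > 0, let ℓ ∈ (0,1), and let k be an integer with k ≤ E(X), P(X ≤ k) ≥ ℓ, and P(X = i) ≤ P(X = k) for all integers i ≤ k. Then P(X = k) ≥ (ℓ^{3/2}/6) · min{1, 1/σ}. -/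
open MeasureTheory ProbabilityTheory

private lemma stmt_5_aux {a p σ σ2 l : ℝ} (ha0 : 0 ≤ a) (hp : 0 < p) (hσ : 0 < σ)
    (hσsq : σ ^ 2 = σ2) (ha2 : a ^ 2 = l ^ 3) (hl3 : l ^ 3 ≤ 32 * p ^ 2 * σ2) :
    a / (6 * σ) ≤ p := by
  rw [div_le_iff₀ (by linarith : (0:ℝ) < 6 * σ)]
  nlinarith [sq_nonneg (6 * p * σ - a), mul_pos hp hσ]

/-- Let `X` be an integer-valued square-integrable random variable with variance
`σ² > 0`, let `ℓ ∈ (0,1)`, and let `k` be an integer with `k ≤ E(X)`,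
`P(X ≤ k) ≥ ℓ`, and `P(X = i) ≤ P(X = k)` for all integers `i ≤ k`. Then
`P(X = k) ≥ (ℓ^{3/2}/6) · min{1, 1/σ}`. -/
theorem stmt_5 {Ω : Type*} [MeasurableSpace Ω] (μ : Measure Ω)
    [IsProbabilityMeasure μ]
    (X : Ω → ℤ) (hXmeas : Measurable X)
    (hX2 : MemLp (fun ω => (X ω : ℝ)) 2 μ)
    (hvar : 0 < variance (fun ω => (X ω : ℝ)) μ)
    (l : ℝ) (hl0 : 0 < l) (hl1 : l < 1)
    (k : ℤ) (hkE : (k : ℝ) ≤ ∫ ω, (X ω : ℝ) ∂μ)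
    (hkl : l ≤ (μ {ω | X ω ≤ k}).toReal)
    (hmode : ∀ i : ℤ, i ≤ k → (μ {ω | X ω = i}).toReal ≤ (μ {ω | X ω = k}).toReal) :
    (μ {ω | X ω = k}).toReal
      ≥ (l ^ ((3 : ℝ) / 2) / 6)
          * min 1 (1 / Real.sqrt (variance (fun ω => (X ω : ℝ)) μ)) := by
  set σ2 := variance (fun ω => (X ω : ℝ)) μ with hσ2
  set σ := Real.sqrt σ2 with hσ
  have hσpos : 0 < σ := Real.sqrt_pos.mpr hvar
  set p := (μ {ω | X ω = k}).toReal with hp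
  have hp0 : 0 ≤ p := ENNReal.toReal_nonneg
  set a := l ^ ((3 : ℝ) / 2) with ha
  have ha0 : 0 ≤ a := Real.rpow_nonneg hl0.le _
  have hal : a ≤ l := by
    calc a ≤ l ^ (1 : ℝ) := Real.rpow_le_rpow_of_exponent_ge hl0 hl1.le (by norm_num)
    _ = l := Real.rpow_one l
  have hmin1 : min 1 (1 / σ) ≤ 1 := min_le_left _ _
  have hminσ : min 1 (1 / σ) ≤ 1 / σ := min_le_right _ _
  have hmin0 : 0 ≤ min 1 (1 / σ) := le_min (by norm_num) (by positivity)
  rcases le_or_gt (l / 2) p with hcase | hcase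
  · -- easy case : p ≥ l/2
    calc a / 6 * min 1 (1 / σ) ≤ a / 6 * 1 := by
          apply mul_le_mul_of_nonneg_left hmin1 (by positivity)
    _ ≤ l / 2 := by nlinarith
    _ ≤ p := hcase
  · -- main case : p < l/2
    have hppos : 0 < p := by
      rcases lt_or_eq_of_le hp0 with h | h
      · exact h
      · exfalso
        have hz : ∀ i : ℤ, μ {ω | X ω = i ∧ i ≤ k} = 0 := by
          intro i
          rcases le_or_gt i k with hik | hik
          · have := hmode i hik
            rw [← h] at this
            have hfin : μ {ω | X ω = i} ≠ ⊤ := measure_ne_top μ _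
            have : (μ {ω | X ω = i}).toReal = 0 :=
              le_antisymm (by exact this) ENNReal.toReal_nonneg
            have h0 : μ {ω | X ω = i} = 0 :=
              (ENNReal.toReal_eq_zero_iff _).mp this |>.resolve_right hfin
            refine measure_mono_null ?_ h0
            intro ω hω; exact hω.1
          · convert measure_empty (μ := μ)
            ext ω; simp only [Set.mem_setOf_eq, Set.mem_empty_iff_false, iff_false]
            rintro ⟨_, h2⟩; omega
        have : μ {ω | X ω ≤ k} = 0 := by
          have hsub : {ω | X ω ≤ k} ⊆ ⋃ i : ℤ, {ω | X ω = i ∧ i ≤ k} := by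
            intro ω hω
            exact Set.mem_iUnion.mpr ⟨X ω, rfl, hω⟩
          exact measure_mono_null hsub (measure_iUnion_null hz)
        rw [this] at hkl
        simp at hkl
        linarith
    set m : ℕ := ⌊l / (2 * p)⌋₊ with hm
    have hlp1 : 1 ≤ l / (2 * p) := by
      rw [le_div_iff₀ (by linarith)]; linarith
    have hm1 : 1 ≤ m := Nat.le_floor (by exact_mod_cast hlp1)
    have hmle : (m : ℝ) ≤ l / (2 * p) := Nat.floor_le (by linarith)
    have hmp : (m : ℝ) * p ≤ l / 2 := by
      have h := hmle
      rw [le_div_iff₀ (by linarith : (0:ℝ) < 2 * p)] at h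
      linarith
    have hmgt : l / (2 * p) < (m : ℝ) + 1 := Nat.lt_floor_add_one _
    have hm4p : l < 4 * p * m := by
      have h1 : (1 : ℝ) ≤ (m : ℝ) := by exact_mod_cast hm1
      rw [div_lt_iff₀ (by linarith)] at hmgt
      nlinarith
    -- step 1 : measure of the middle band
    have hband : (μ {ω | k - (m : ℤ) < X ω ∧ X ω ≤ k}).toReal ≤ (m : ℝ) * p := by
      have hsub : {ω | k - (m : ℤ) < X ω ∧ X ω ≤ k} ⊆
          ⋃ j ∈ Finset.Ioc (k - (m : ℤ)) k, {ω | X ω = j} := by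
        intro ω hω
        simp only [Set.mem_iUnion, Finset.mem_Ioc]
        exact ⟨X ω, ⟨hω.1, hω.2⟩, rfl⟩
      have h1 : μ {ω | k - (m : ℤ) < X ω ∧ X ω ≤ k} ≤
          ∑ j ∈ Finset.Ioc (k - (m : ℤ)) k, μ {ω | X ω = j} :=
        le_trans (measure_mono hsub) (measure_biUnion_finset_le _ _)
      have h2 : (μ {ω | k - (m : ℤ) < X ω ∧ X ω ≤ k}).toReal ≤
          ∑ j ∈ Finset.Ioc (k - (m : ℤ)) k, (μ {ω | X ω = j}).toReal := by
        rw [← ENNReal.toReal_sum (fun j _ => measure_ne_top μ _)]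
        exact ENNReal.toReal_mono (by
          exact ENNReal.sum_lt_top.mpr (fun j _ => (measure_lt_top μ _)) |>.ne) h1
      refine h2.trans ?_
      calc ∑ j ∈ Finset.Ioc (k - (m : ℤ)) k, (μ {ω | X ω = j}).toReal
          ≤ ∑ j ∈ Finset.Ioc (k - (m : ℤ)) k, p := by
            apply Finset.sum_le_sum
            intro j hj
            exact hmode j (Finset.mem_Ioc.mp hj).2
      _ = (m : ℝ) * p := by
            rw [Finset.sum_const, Int.card_Ioc]
            simp [nsmul_eq_mul]
    -- step 2 : the tail A has mass ≥ l/2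
    set A := {ω | X ω ≤ k - (m : ℤ)} with hA
    have hAmeas : MeasurableSet A := hXmeas measurableSet_Iic
    have hAmass : l / 2 ≤ (μ A).toReal := by
      have hsub : {ω | X ω ≤ k} ⊆ A ∪ {ω | k - (m : ℤ) < X ω ∧ X ω ≤ k} := by
        intro ω hω
        rcases le_or_gt (X ω) (k - (m : ℤ)) with h | h
        · exact Or.inl h
        · exact Or.inr ⟨h, hω⟩
      have h1 : μ {ω | X ω ≤ k} ≤ μ A + μ {ω | k - (m : ℤ) < X ω ∧ X ω ≤ k} :=
        le_trans (measure_mono hsub) (measure_union_le _ _)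
      have h2 : (μ {ω | X ω ≤ k}).toReal ≤
          (μ A).toReal + (μ {ω | k - (m : ℤ) < X ω ∧ X ω ≤ k}).toReal := by
        rw [← ENNReal.toReal_add (measure_ne_top μ _) (measure_ne_top μ _)]
        exact ENNReal.toReal_mono (ENNReal.add_ne_top.mpr
          ⟨measure_ne_top μ _, measure_ne_top μ _⟩) h1
      linarith
    -- step 3 : variance lower bound
    set c := ∫ ω, (X ω : ℝ) ∂μ with hc
    have hg : Integrable (fun ω => ((X ω : ℝ) - c) ^ 2) μ :=
      (hX2.sub (memLp_const c)).integrable_sq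
    have hvareq : σ2 = ∫ ω, ((X ω : ℝ) - c) ^ 2 ∂μ := by
      rw [hσ2, variance_eq_integral hX2.aestronglyMeasurable.aemeasurable]
    have hvarge : (m : ℝ) ^ 2 * (μ A).toReal ≤ σ2 := by
      have hptwise : ∀ ω ∈ A, ((m : ℝ)) ^ 2 ≤ ((X ω : ℝ) - c) ^ 2 := by
        intro ω hω
        have h1 : (X ω : ℝ) ≤ (k : ℝ) - (m : ℝ) := by
          have : (X ω : ℤ) ≤ k - (m : ℤ) := hω
          push_cast
          exact_mod_cast this
        have h2 : (m : ℝ) ≤ c - (X ω : ℝ) := by linarith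
        have h3 : (0 : ℝ) ≤ (m : ℝ) := Nat.cast_nonneg m
        nlinarith
      calc (m : ℝ) ^ 2 * (μ A).toReal
          = ∫ _ in A, ((m : ℝ)) ^ 2 ∂μ := by rw [setIntegral_const]; ring_nf; rfl
      _ ≤ ∫ ω in A, ((X ω : ℝ) - c) ^ 2 ∂μ := by
            apply setIntegral_mono_on (integrableOn_const (measure_ne_top μ _))
              hg.integrableOn hAmeas hptwise
      _ ≤ ∫ ω, ((X ω : ℝ) - c) ^ 2 ∂μ :=
            setIntegral_le_integral hg (Filter.Eventually.of_forall (fun ω => sq_nonneg _))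
      _ = σ2 := hvareq.symm
    -- step 4 : combine
    have hkey : (m : ℝ) ^ 2 * (l / 2) ≤ σ2 := by
      calc (m : ℝ) ^ 2 * (l / 2) ≤ (m : ℝ) ^ 2 * (μ A).toReal := by
            apply mul_le_mul_of_nonneg_left hAmass (by positivity)
      _ ≤ σ2 := hvarge
    clear_value A c m a p σ σ2
    have hl3 : l ^ 3 ≤ 32 * p ^ 2 * σ2 := by
      have h1 : l * l ≤ (4 * p * (m:ℝ)) * (4 * p * (m:ℝ)) :=
        mul_self_le_mul_self hl0.le hm4p.le
      have h2 : l * l * (l/2) ≤ (4 * p * (m:ℝ)) * (4 * p * (m:ℝ)) * (l/2) :=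
        mul_le_mul_of_nonneg_right h1 (by linarith)
      have h3 : (16 * p^2) * ((m:ℝ)^2 * (l/2)) ≤ (16 * p^2) * σ2 :=
        mul_le_mul_of_nonneg_left hkey (by positivity)
      have h4 : (4 * p * (m:ℝ)) * (4 * p * (m:ℝ)) * (l/2) = (16 * p^2) * ((m:ℝ)^2 * (l/2)) := by ring
      have h5 : l * l * (l/2) = l^3 / 2 := by ring
      have h6 : (16 * p^2) * σ2 = (32 * p^2 * σ2) / 2 := by ring
      linarith [h2, h3]
    have hσsq : σ ^ 2 = σ2 := by rw [hσ]; exact Real.sq_sqrt hvar.le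
    have ha2 : a ^ 2 = l ^ 3 := by
      rw [ha, ← Real.rpow_natCast (l ^ ((3:ℝ)/2)) 2, ← Real.rpow_mul hl0.le,
        ← Real.rpow_natCast l 3]
      norm_num
    have hfinal : a / (6 * σ) ≤ p := stmt_5_aux ha0 hppos hσpos hσsq ha2 hl3
    calc a / 6 * min 1 (1 / σ)
        ≤ a / 6 * (1 / σ) := mul_le_mul_of_nonneg_left hminσ (by linarith)
    _ = a / (6 * σ) := by rw [div_mul_div_comm, mul_one]
    _ ≤ p := hfinal
end
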